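/- arXiv:1611.09997 — 5 statements merged into one kernel-verified Lean document; each statement's English description precedes it below -/
import Mathlib

section
/- If the conserved total energy satisfies E < min over pairs (i,j) of the values -m_i m_j/(r_i + r_j), then no body can escape: there is no trajectory along which two of the three pairwise distances tend to infinity. -/
open Filter

private lemma no_escape_key (A B C E s : ℝ) (hA : 0 < A) (hB : 0 < B) (hC : 0 < C)
    (hs : 0 < s) (da db dc : ℝ → ℝ) (hda : ∀ t, s ≤ da t)
    (hle : ∀ t, -(A / da t + B / db t + C / dc t) ≤ E)
    (hE : E < -(A / s))
    (hb : Filter.Tendsto db atTop atTop) (hc : Filter.Tendsto dc atTop atTop) : False := by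
  obtain ⟨ε, hε⟩ : ∃ ε : ℝ, ε = -(A / s) - E := ⟨_, rfl⟩
  have hεpos : 0 < ε := by rw [hε]; linarith
  obtain ⟨t, htb, htc⟩ := ((hb.eventually_ge_atTop (2 * B / ε + 1)).and
    (hc.eventually_ge_atTop (2 * C / ε + 1))).exists
  have hdbt : 0 < db t := by
    have : 0 < 2 * B / ε := by positivity
    linarith
  have hdct : 0 < dc t := by
    have : 0 < 2 * C / ε := by positivity
    linarith
  have h1 : A / da t ≤ A / s := by
    apply div_le_div_of_nonneg_left (le_of_lt hA) hs (hda t)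
  have hεne : ε ≠ 0 := ne_of_gt hεpos
  have h2 : B / db t < ε / 2 := by
    rw [div_lt_div_iff₀ hdbt (by norm_num : (0:ℝ) < 2)]
    have hmul : ε * (2 * B / ε + 1) ≤ ε * db t := mul_le_mul_of_nonneg_left htb hεpos.le
    have he : ε * (2 * B / ε + 1) = 2 * B + ε := by field_simp
    linarith
  have h3 : C / dc t < ε / 2 := by
    rw [div_lt_div_iff₀ hdct (by norm_num : (0:ℝ) < 2)]
    have hmul : ε * (2 * C / ε + 1) ≤ ε * dc t := mul_le_mul_of_nonneg_left htc hεpos.le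
    have he : ε * (2 * C / ε + 1) = 2 * C + ε := by field_simp
    linarith
  have := hle t
  linarith

/-- If the conserved energy is below the minimum over pairs of `-mᵢmⱼ/(rᵢ+rⱼ)`,
then no body can escape: no two of the pairwise distances can tend to infinity. -/
theorem no_escape_of_low_energy
    (m1 m2 m3 r1 r2 r3 IS H E : ℝ)
    (hm1 : 0 < m1) (hm2 : 0 < m2) (hm3 : 0 < m3) (hIS : 0 ≤ IS)
    (hr1 : 0 < r1) (hr2 : 0 < r2) (hr3 : 0 < r3)
    (d12 d23 d31 : ℝ → ℝ)
    (hd12 : ∀ t, r1 + r2 ≤ d12 t)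
    (hd23 : ∀ t, r2 + r3 ≤ d23 t)
    (hd31 : ∀ t, r3 + r1 ≤ d31 t)
    (hEQ : ∀ t, H^2 / (2 * (m1 * m2 * (d12 t)^2 + m2 * m3 * (d23 t)^2
        + m3 * m1 * (d31 t)^2 + IS))
        - (m1 * m2 / d12 t + m2 * m3 / d23 t + m3 * m1 / d31 t) ≤ E)
    (hE : E < min (- m1 * m2 / (r1 + r2))
        (min (- m2 * m3 / (r2 + r3)) (- m3 * m1 / (r3 + r1)))) :
    ¬ (Tendsto d23 atTop atTop ∧ Tendsto d31 atTop atTop) ∧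
    ¬ (Tendsto d31 atTop atTop ∧ Tendsto d12 atTop atTop) ∧
    ¬ (Tendsto d12 atTop atTop ∧ Tendsto d23 atTop atTop) := by
  have hd12p : ∀ t, 0 < d12 t := fun t => lt_of_lt_of_le (by linarith) (hd12 t)
  have hd23p : ∀ t, 0 < d23 t := fun t => lt_of_lt_of_le (by linarith) (hd23 t)
  have hd31p : ∀ t, 0 < d31 t := fun t => lt_of_lt_of_le (by linarith) (hd31 t)
  have hlow : ∀ t, -(m1 * m2 / d12 t + m2 * m3 / d23 t + m3 * m1 / d31 t) ≤ E := by
    intro t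
    have hIpos : 0 < 2 * (m1 * m2 * (d12 t)^2 + m2 * m3 * (d23 t)^2
        + m3 * m1 * (d31 t)^2 + IS) := by
      have := hd12p t
      have := hd23p t
      have := hd31p t
      positivity
    have hH : 0 ≤ H^2 / (2 * (m1 * m2 * (d12 t)^2 + m2 * m3 * (d23 t)^2
        + m3 * m1 * (d31 t)^2 + IS)) := div_nonneg (sq_nonneg H) (le_of_lt hIpos)
    have := hEQ t
    linarith
  have hE1 : E < -(m1 * m2 / (r1 + r2)) := by
    have := lt_of_lt_of_le hE (min_le_left _ _)
    have hne : r1 + r2 ≠ 0 := by positivity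
    field_simp at this ⊢
    linarith
  have hE2 : E < -(m2 * m3 / (r2 + r3)) := by
    have := lt_of_lt_of_le hE (le_trans (min_le_right _ _) (min_le_left _ _))
    field_simp at this ⊢
    linarith
  have hE3 : E < -(m3 * m1 / (r3 + r1)) := by
    have := lt_of_lt_of_le hE (le_trans (min_le_right _ _) (min_le_right _ _))
    field_simp at this ⊢
    linarith
  refine ⟨fun ⟨h23, h31⟩ => ?_, fun ⟨h31, h12⟩ => ?_, fun ⟨h12, h23⟩ => ?_⟩
  · exact no_escape_key (m1*m2) (m2*m3) (m3*m1) E (r1+r2) (by positivity) (by positivity)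
      (by positivity) (by positivity) d12 d23 d31 hd12
      (fun t => by have := hlow t; linarith) hE1 h23 h31
  · exact no_escape_key (m2*m3) (m3*m1) (m1*m2) E (r2+r3) (by positivity) (by positivity)
      (by positivity) (by positivity) d23 d31 d12 hd23
      (fun t => by have := hlow t; linarith) hE2 h31 h12
  · exact no_escape_key (m3*m1) (m1*m2) (m2*m3) E (r3+r1) (by positivity) (by positivity)
      (by positivity) (by positivity) d31 d12 d23 hd31
      (fun t => by have := hlow t; linarith) hE3 h12 h23
end

section
/- If body k escapes (hyperbolic-elliptic motion HE_k), then the total energy satisfies E ≥ -m_i m_j/(r_i + r_j), where {i,j} is the remaining bound pair. -/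
open Filter

/-- If body 3 escapes (hyperbolic-elliptic motion HE₃), then the conserved total
energy satisfies `E ≥ -m1 m2/(r1 + r2)`, where bodies 1 and 2 are the bound pair. -/
theorem energy_bound_of_escape
    (m1 m2 m3 r1 r2 r3 IS H E : ℝ)
    (hm1 : 0 < m1) (hm2 : 0 < m2) (hm3 : 0 < m3) (hIS : 0 ≤ IS)
    (hr1 : 0 < r1) (hr2 : 0 < r2) (hr3 : 0 < r3)
    (d12 d23 d31 : ℝ → ℝ)
    (hd12 : ∀ t, r1 + r2 ≤ d12 t)
    (hd23 : ∀ t, r2 + r3 ≤ d23 t)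
    (hd31 : ∀ t, r3 + r1 ≤ d31 t)
    (hEQ : ∀ t, H^2 / (2 * (m1 * m2 * (d12 t)^2 + m2 * m3 * (d23 t)^2
        + m3 * m1 * (d31 t)^2 + IS))
        - (m1 * m2 / d12 t + m2 * m3 / d23 t + m3 * m1 / d31 t) ≤ E)
    (h23 : Tendsto d23 atTop atTop) (h31 : Tendsto d31 atTop atTop) :
    - m1 * m2 / (r1 + r2) ≤ E := by
  have hkey : ∀ t, -m1 * m2 / (r1 + r2) - m2 * m3 / d23 t - m3 * m1 / d31 t ≤ E := by
    intro t
    have h12 := hd12 t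
    have h23' := hd23 t
    have h31' := hd31 t
    have hp12 : 0 < d12 t := lt_of_lt_of_le (by positivity) h12
    have hp23 : 0 < d23 t := lt_of_lt_of_le (by positivity) h23'
    have hp31 : 0 < d31 t := lt_of_lt_of_le (by positivity) h31'
    have hH : 0 ≤ H^2 / (2 * (m1 * m2 * (d12 t)^2 + m2 * m3 * (d23 t)^2
        + m3 * m1 * (d31 t)^2 + IS)) := by positivity
    have hmono : m1 * m2 / d12 t ≤ m1 * m2 / (r1 + r2) :=
      div_le_div_of_nonneg_left (by positivity) (by positivity) h12
    have := hEQ t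
    have hneg : -m1 * m2 / (r1 + r2) = -(m1 * m2 / (r1 + r2)) := by ring
    linarith
  have hlim : Tendsto (fun t => -m1 * m2 / (r1 + r2) - m2 * m3 / d23 t - m3 * m1 / d31 t)
      atTop (nhds (-m1 * m2 / (r1 + r2) - 0 - 0)) :=
    (tendsto_const_nhds.sub (tendsto_const_nhds.div_atTop h23)).sub
      (tendsto_const_nhds.div_atTop h31)
  rw [sub_zero, sub_zero] at hlim
  exact le_of_tendsto hlim (Eventually.of_forall hkey)
end

section
/- If E is conserved, T_r(t) ≤ T_r^M for all t, E - T_r^M > 0, and T(t) ≥ T_r(t) ≥ 0, then I_p'' (t) = 2(T(t) - T_r(t)) + 2(E - T_r(t)) is bounded below by the positive constant 2(E - T_r^M), and hence I_p → ∞, so the motion cannot be bounded. -/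
/-!
By the Lagrange–Jacobi identity and `Tr ≤ T`, `Tr ≤ TrM`, the second derivative of `Ip` is
bounded below by `2 (E - TrM) > 0`. A derivative bounded below by a positive constant forces
linear growth, so first `Ip'` and then `Ip` itself tend to infinity.
-/

open Filter

theorem tendsto_atTop_of_eventually_const_le_deriv {f : ℝ → ℝ} {c : ℝ} (hc : 0 < c)
    (hf : ∀ᶠ x in atTop, c ≤ deriv f x) : Tendsto f atTop atTop := by
  obtain ⟨a, ha⟩ := eventually_atTop.1 hf
  -- `deriv` is `0` at points of non-differentiability, so a positive derivative is a genuine one.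
  have hdiff : DifferentiableOn ℝ f (Set.Ici a) := fun x hx =>
    (differentiableAt_of_deriv_ne_zero (hc.trans_le (ha x hx)).ne').differentiableWithinAt
  have hgrowth : ∀ x, a ≤ x → c * (x - a) ≤ f x - f a := fun x hx =>
    (convex_Ici a).mul_sub_le_image_sub_of_le_deriv hdiff.continuousOn
      (hdiff.mono interior_subset) (fun y hy => ha y (interior_subset hy))
      a Set.self_mem_Ici x hx hx
  have hline : Tendsto (fun x => c * x + (f a - c * a)) atTop atTop :=
    tendsto_atTop_add_const_right _ _ (tendsto_id.const_mul_atTop hc)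
  refine tendsto_atTop_mono' atTop ?_ hline
  filter_upwards [eventually_ge_atTop a] with x hx
  linarith [hgrowth x hx]

theorem tendsto_atTop_of_const_le_deriv_deriv {f : ℝ → ℝ} {c : ℝ} (hc : 0 < c)
    (hf : ∀ x, c ≤ deriv (deriv f) x) : Tendsto f atTop atTop :=
  have hf' : Tendsto (deriv f) atTop atTop :=
    tendsto_atTop_of_eventually_const_le_deriv hc (Eventually.of_forall hf)
  tendsto_atTop_of_eventually_const_le_deriv one_pos (hf'.eventually_ge_atTop 1)

theorem escape_sufficiency_general
    (Ip T Tr : ℝ → ℝ) (E TrM : ℝ)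
    (hTrM : ∀ t, Tr t ≤ TrM)
    (hE : 0 < E - TrM)
    (hT : ∀ t, Tr t ≤ T t)
    (hLJ : ∀ t, deriv (deriv Ip) t = 2 * (T t - Tr t) + 2 * (E - Tr t)) :
    (∀ t, 2 * (E - TrM) ≤ deriv (deriv Ip) t) ∧ Tendsto Ip atTop atTop := by
  have hbound : ∀ t, 2 * (E - TrM) ≤ deriv (deriv Ip) t := fun t => by
    rw [hLJ t]
    linarith [hTrM t, hT t]
  exact ⟨hbound, tendsto_atTop_of_const_le_deriv_deriv (by positivity) hbound⟩

/-- Sufficiency condition for escape: if the conserved energy exceeds the uniform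
upper bound on the rotational kinetic energy, the Lagrange–Jacobi identity bounds
`I_p''` below by the positive constant `2 (E - T_rᴹ)`, so `I_p → ∞` and the motion
cannot be bounded. -/
theorem escape_sufficiency
    (Ip T Tr : ℝ → ℝ) (E TrM t0 : ℝ)
    (hTrM : ∀ t, Tr t ≤ TrM)
    (hE : 0 < E - TrM)
    (hT : ∀ t, Tr t ≤ T t)
    (hTr : ∀ t, 0 ≤ Tr t)
    (hLJ : ∀ t, deriv (deriv Ip) t = 2 * (T t - Tr t) + 2 * (E - Tr t))
    (hdiff : ∀ t, t0 ≤ t → DifferentiableAt ℝ Ip t)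
    (hdiff' : ∀ t, t0 ≤ t → DifferentiableAt ℝ (deriv Ip) t)
    (hpos : ∀ t, t0 ≤ t → 0 < Ip t) :
    (∀ t, 2 * (E - TrM) ≤ deriv (deriv Ip) t) ∧ Tendsto Ip atTop atTop :=
  escape_sufficiency_general Ip T Tr E TrM hTrM hE hT hLJ
end

section
/- E_{2b} < E_{2f}: the threshold energy for existence of an orbital relative equilibrium, E_{2b} = -(m_i m_j)^{3/2}/(3√3 √((m_i+m_j)(I_{Si}+I_{Sj}))), is strictly less than the fission energy E_{2f} = (1/2)·(m_i+m_j)/(r_i+r_j)^3·[I_{Si}+I_{Sj} - (m_i m_j/(m_i+m_j))(r_i+r_j)^2], for spheres with I_{Si} = (2/5) m_i r_i^2, positive masses and radii. -/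
set_option maxHeartbeats 1600000 in
/-- `E₂ᵦ < E₂f`: the threshold energy for existence of an orbital relative
equilibrium is strictly less than the fission energy of the resting configuration,
for two constant-density spheres. -/
theorem E2b_lt_E2f
    (mi mj ri rj ρ : ℝ)
    (hri : 0 < ri) (hrj : 0 < rj) (hρ : 0 < ρ)
    (hmi : mi = ρ * ri^3) (hmj : mj = ρ * rj^3) :
    -(mi * mj)^((3:ℝ)/2)
        / (3 * Real.sqrt 3 * Real.sqrt ((mi + mj) * (2/5 * mi * ri^2 + 2/5 * mj * rj^2)))
    < 1/2 * ((mi + mj) / (ri + rj)^3)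
        * (2/5 * mi * ri^2 + 2/5 * mj * rj^2 - mi * mj / (mi + mj) * (ri + rj)^2) := by
  have hmi0 : 0 < mi := by rw [hmi]; positivity
  have hmj0 : 0 < mj := by rw [hmj]; positivity
  have hA0 : 0 < mi * mj := mul_pos hmi0 hmj0
  have hM0 : 0 < mi + mj := by linarith
  have hI0 : 0 < 2/5 * mi * ri^2 + 2/5 * mj * rj^2 := by positivity
  have hR0 : 0 < ri + rj := by linarith
  have hMI : 0 < (mi + mj) * (2/5 * mi * ri^2 + 2/5 * mj * rj^2) := mul_pos hM0 hI0
  -- always: 3 * (M*I) > A*R^2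
  have hu : mi * mj * (ri + rj)^2 < 3 * ((mi + mj) * (2/5 * mi * ri^2 + 2/5 * mj * rj^2)) := by
    have hexp : 3 * ((mi + mj) * (2/5 * mi * ri^2 + 2/5 * mj * rj^2))
        - mi * mj * (ri + rj)^2
        = ρ^2/5 * (6*(ri^4 - rj^4)^2 + 2*ri^4*rj^4 + ri^5*rj^3 + ri^3*rj^5) := by
      rw [hmi, hmj]; ring
    have hpos : 0 < ρ^2/5 * (6*(ri^4 - rj^4)^2 + 2*ri^4*rj^4 + ri^5*rj^3 + ri^3*rj^5) := by
      positivity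
    linarith
  obtain ⟨C, hC⟩ : ∃ c : ℝ, c = 1/2 * ((mi + mj) / (ri + rj)^3)
      * (2/5 * mi * ri^2 + 2/5 * mj * rj^2 - mi * mj / (mi + mj) * (ri + rj)^2) := ⟨_, rfl⟩
  rw [← hC]
  have hsB : 0 < Real.sqrt ((mi + mj) * (2/5 * mi * ri^2 + 2/5 * mj * rj^2)) :=
    Real.sqrt_pos.2 hMI
  have hs3 : 0 < Real.sqrt 3 := Real.sqrt_pos.2 (by norm_num)
  have hden : 0 < 3 * Real.sqrt 3
      * Real.sqrt ((mi + mj) * (2/5 * mi * ri^2 + 2/5 * mj * rj^2)) := by positivity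
  have hrpow : 0 < (mi * mj) ^ ((3:ℝ)/2) := Real.rpow_pos_of_pos hA0 _
  rcases le_or_gt 0 C with hCpos | hCneg
  · -- RHS nonnegative, LHS negative
    calc -(mi * mj)^((3:ℝ)/2)
        / (3 * Real.sqrt 3 * Real.sqrt ((mi + mj) * (2/5 * mi * ri^2 + 2/5 * mj * rj^2)))
        < 0 := by
          apply div_neg_of_neg_of_pos _ hden
          linarith
      _ ≤ C := hCpos
  · -- RHS negative
    have hCeq : C = ((mi + mj) * (2/5 * mi * ri^2 + 2/5 * mj * rj^2)
        - mi * mj * (ri + rj)^2) / (2 * (ri + rj)^3) := by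
      rw [hC]; field_simp
    have hD : (mi + mj) * (2/5 * mi * ri^2 + 2/5 * mj * rj^2)
        - mi * mj * (ri + rj)^2 < 0 := by
      by_contra h
      push_neg at h
      have : 0 ≤ C := hCeq ▸ div_nonneg h (by positivity)
      linarith
    -- key polynomial inequality
    have hC4 : C * (2 * (ri + rj)^3)
        = (mi + mj) * (2/5 * mi * ri^2 + 2/5 * mj * rj^2) - mi * mj * (ri + rj)^2 := by
      rw [hCeq]
      field_simp
    have hsub2 : C^2 * (4 * (ri + rj)^6)
        = ((mi + mj) * (2/5 * mi * ri^2 + 2/5 * mj * rj^2) - mi * mj * (ri + rj)^2)^2 := by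
      rw [← hC4]; ring
    have hAR : 0 < mi * mj * (ri + rj)^2 := by positivity
    have h2 : 0 < 4 * (mi * mj * (ri + rj)^2)
        - 3 * ((mi + mj) * (2/5 * mi * ri^2 + 2/5 * mj * rj^2)) := by linarith
    have h1 : 0 < (3 * ((mi + mj) * (2/5 * mi * ri^2 + 2/5 * mj * rj^2))
        - mi * mj * (ri + rj)^2)^2 := by
      have h1' : 0 < 3 * ((mi + mj) * (2/5 * mi * ri^2 + 2/5 * mj * rj^2))
          - mi * mj * (ri + rj)^2 := by linarith
      positivity
    have hkey2 : 27 * ((mi + mj) * (2/5 * mi * ri^2 + 2/5 * mj * rj^2)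
        - mi * mj * (ri + rj)^2)^2
        * ((mi + mj) * (2/5 * mi * ri^2 + 2/5 * mj * rj^2))
        < 4 * (mi * mj * (ri + rj)^2)^3 := by
      have he : 4 * (mi * mj * (ri + rj)^2)^3
          - 27 * ((mi + mj) * (2/5 * mi * ri^2 + 2/5 * mj * rj^2)
            - mi * mj * (ri + rj)^2)^2
            * ((mi + mj) * (2/5 * mi * ri^2 + 2/5 * mj * rj^2))
          = (3 * ((mi + mj) * (2/5 * mi * ri^2 + 2/5 * mj * rj^2))
              - mi * mj * (ri + rj)^2)^2
            * (4 * (mi * mj * (ri + rj)^2)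
              - 3 * ((mi + mj) * (2/5 * mi * ri^2 + 2/5 * mj * rj^2))) := by ring
      linarith [mul_pos h1 h2, he]
    have hkey : 27 * C^2 * ((mi + mj) * (2/5 * mi * ri^2 + 2/5 * mj * rj^2))
        < (mi * mj)^3 := by
      have h46 : (0:ℝ) < 4 * (ri + rj)^6 := by positivity
      have hchain :
          27 * C^2 * ((mi + mj) * (2/5 * mi * ri^2 + 2/5 * mj * rj^2)) * (4 * (ri + rj)^6)
          < (mi * mj)^3 * (4 * (ri + rj)^6) := by
        calc 27 * C^2 * ((mi + mj) * (2/5 * mi * ri^2 + 2/5 * mj * rj^2)) * (4 * (ri + rj)^6)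
            = 27 * (C^2 * (4 * (ri + rj)^6))
              * ((mi + mj) * (2/5 * mi * ri^2 + 2/5 * mj * rj^2)) := by ring
          _ = 27 * ((mi + mj) * (2/5 * mi * ri^2 + 2/5 * mj * rj^2)
              - mi * mj * (ri + rj)^2)^2
              * ((mi + mj) * (2/5 * mi * ri^2 + 2/5 * mj * rj^2)) := by rw [hsub2]
          _ < 4 * (mi * mj * (ri + rj)^2)^3 := hkey2
          _ = (mi * mj)^3 * (4 * (ri + rj)^6) := by ring
      exact lt_of_mul_lt_mul_right hchain h46.le
    -- from squared inequality to the sqrt inequality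
    have hgoal : (-C) * (3 * Real.sqrt 3
        * Real.sqrt ((mi + mj) * (2/5 * mi * ri^2 + 2/5 * mj * rj^2)))
        < (mi * mj) ^ ((3:ℝ)/2) := by
      apply lt_of_pow_lt_pow_left₀ 2 (le_of_lt hrpow)
      have hsq : ((-C) * (3 * Real.sqrt 3
          * Real.sqrt ((mi + mj) * (2/5 * mi * ri^2 + 2/5 * mj * rj^2))))^2
          = 27 * C^2 * ((mi + mj) * (2/5 * mi * ri^2 + 2/5 * mj * rj^2)) := by
        rw [mul_pow, mul_pow, mul_pow, Real.sq_sqrt (le_of_lt hMI),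
          Real.sq_sqrt (by norm_num : (0:ℝ) ≤ 3)]
        ring
      have hA3 : ((mi * mj) ^ ((3:ℝ)/2))^2 = (mi * mj)^3 := by
        rw [← Real.rpow_natCast ((mi * mj) ^ ((3:ℝ)/2)) 2, ← Real.rpow_mul (le_of_lt hA0)]
        norm_num
      rw [hsq, hA3]
      exact hkey
    rw [div_lt_iff₀ hden]
    linarith [hgoal]
end

section
/- If the post-fission energy satisfies E_f + m_i m_j/(1 - r_k) > 0, then the maximum escape speed V_M = sqrt( 2/(m_k (m_i+m_j)) · (E_f + m_i m_j/(1-r_k)) ) is well-defined and any admissible escape speed V_∞ (with the bound pair resting at distance d_{ij} ≥ 1 - r_k and nonnegative rotational energy) satisfies V_∞ ≤ V_M. -/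
/-- Upper bound on the escape speed after fission: any admissible escape speed
`V∞` (with the bound pair at distance `d_ij ≥ 1 - r_k` and nonnegative rotational
energy) satisfies `V∞ ≤ V_M`. -/
theorem escape_speed_bound
    (mi mj mk rk ISi ISj Ef Vinf Ω dij : ℝ)
    (hmi : 0 < mi) (hmj : 0 < mj) (hmk : 0 < mk)
    (hISi : 0 < ISi) (hISj : 0 < ISj)
    (hrk : 0 < 1 - rk)
    (hdij : 1 - rk ≤ dij)
    (hVinf : 0 ≤ Vinf)
    (hΩ2 : 0 ≤ Ω^2)
    (hEf : Ef = 1/2 * mk * (mi + mj) * Vinf^2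
      + 1/2 * (ISi + ISj + mi * mj / (mi + mj) * dij^2) * Ω^2
      - mi * mj / dij)
    (hpos : 0 < Ef + mi * mj / (1 - rk)) :
    Vinf ≤ Real.sqrt (2 / (mk * (mi + mj)) * (Ef + mi * mj / (1 - rk))) := by
  have hsum : 0 < mi + mj := by linarith
  have hdij0 : 0 < dij := lt_of_lt_of_le hrk hdij
  have hinv : mi * mj / dij ≤ mi * mj / (1 - rk) :=
    div_le_div_of_nonneg_left (by positivity) hrk hdij
  have hrot : 0 ≤ 1/2 * (ISi + ISj + mi * mj / (mi + mj) * dij^2) * Ω^2 := by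
    positivity
  have hkey : 1/2 * mk * (mi + mj) * Vinf^2 ≤ Ef + mi * mj / (1 - rk) := by
    rw [hEf]; linarith
  rw [Real.le_sqrt hVinf]
  rw [div_mul_eq_mul_div, le_div_iff₀ (by positivity)]
  nlinarith [hkey]
  exact le_of_lt (mul_pos (by positivity) hpos)
end
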